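/- Let C be a 2-category, F : C^op → Cat a normal pseudo-functor, and (I, ρ) a bi-representation of F. Set i = ρ_I(id_I). Then the assignment ρ̄_X(f) = F(f)(i) for f : X → I, with ρ̄_X(γ) = F(γ)_i on 2-morphisms, defines for each object X an equivalence of categories ρ̄_X : C(X, I) → F(X), and these assemble into a pseudo-natural equivalence ρ̄ : C(−,I) ≃ F which is isomorphic to ρ (via the components of ρ's naturality isomorphisms evaluated at id_I). -/

import Mathlib

open CategoryTheory
open scoped CategoryTheory.Bicategory

universe u

variable {C : Type u} [Bicategory.{u, u} C] [Bicategory.Strict C]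

/-- A normal pseudofunctor `C^op ⟶ Cat` on a 2-category `C` (contravariant on 1-morphisms,
covariant on 2-morphisms): it preserves identities strictly and composition up to
coherent compositor isomorphisms. -/
structure NPCat (C : Type u) [Bicategory.{u, u} C] [Bicategory.Strict C] where
  obj : C → Cat.{u, u}
  map : ∀ {X Y : C}, (X ⟶ Y) → (obj Y ⥤ obj X)
  map₂ : ∀ {X Y : C} {f g : X ⟶ Y}, (f ⟶ g) → (map f ⟶ map g)
  map₂_id : ∀ {X Y : C} (f : X ⟶ Y), map₂ (𝟙 f) = 𝟙 (map f)
  map₂_comp : ∀ {X Y : C} {f g h : X ⟶ Y} (γ : f ⟶ g) (δ : g ⟶ h),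
      map₂ (γ ≫ δ) = map₂ γ ≫ map₂ δ
  map_id : ∀ X : C, map (𝟙 X) = 𝟭 (obj X)
  mapComp : ∀ {X Y Z : C} (f : X ⟶ Y) (g : Y ⟶ Z), map g ⋙ map f ≅ map (f ≫ g)
  mapComp_natural : ∀ {X Y Z : C} {f f' : X ⟶ Y} {g g' : Y ⟶ Z} (γ : f ⟶ f') (δ : g ⟶ g'),
      (CategoryTheory.Functor.whiskerRight (map₂ δ) (map f) ≫
        CategoryTheory.Functor.whiskerLeft (map g') (map₂ γ)) ≫ (mapComp f' g').hom =
      (mapComp f g).hom ≫ map₂ (γ ▷ g ≫ f' ◁ δ)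
  mapComp_assoc : ∀ {X Y Z W : C} (f : X ⟶ Y) (g : Y ⟶ Z) (h : Z ⟶ W),
      CategoryTheory.Functor.whiskerLeft (map h) (mapComp f g).hom ≫ (mapComp (f ≫ g) h).hom =
      CategoryTheory.Functor.whiskerRight (mapComp g h).hom (map f) ≫ (mapComp f (g ≫ h)).hom ≫
        eqToHom (by rw [Category.assoc])
  mapComp_id_left : ∀ {X Y : C} (f : X ⟶ Y),
      (mapComp (𝟙 X) f).hom = eqToHom (by rw [map_id, Functor.comp_id, Category.id_comp])
  mapComp_id_right : ∀ {X Y : C} (f : X ⟶ Y),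
      (mapComp f (𝟙 Y)).hom = eqToHom (by rw [map_id, Functor.id_comp, Category.comp_id])

/-- Precomposition with `c` as a functor between hom-categories of a 2-category. -/
def precompF (I : C) {X Y : C} (c : X ⟶ Y) : (Y ⟶ I) ⥤ (X ⟶ I) where
  obj h := c ≫ h
  map η := c ◁ η
  map_id h := Bicategory.whiskerLeft_id c h
  map_comp η θ := Bicategory.whiskerLeft_comp c η θ

/-- Whiskering of `precompF` in the first variable. -/
def precompNat (I : C) {X Y : C} {c d : X ⟶ Y} (γ : c ⟶ d) :
    precompF I c ⟶ precompF I d where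
  app h := γ ▷ h
  naturality _ _ η := Bicategory.whisker_exchange γ η

lemma precompF_comp (I : C) {X Y Z : C} (c : X ⟶ Y) (d : Y ⟶ Z) :
    precompF I d ⋙ precompF I c = precompF I (c ≫ d) := by
  refine CategoryTheory.Functor.ext (fun h => (Category.assoc c d h).symm) ?_
  intro h h' η
  simp [precompF, Bicategory.comp_whiskerLeft, Bicategory.Strict.associator_eqToIso,
    eqToHom_trans, eqToHom_trans_assoc]
  erw [eqToHom_trans, eqToHom_refl, Category.comp_id]

/-- A bi-representation of a normal pseudofunctor `F : C^op ⟶ Cat`: an object `I`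
together with a pseudo-natural (adjoint) equivalence `C(−, I) ≃ F`. -/
structure BiRep (F : NPCat C) (I : C) where
  app : ∀ X : C, (X ⟶ I) ⥤ F.obj X
  app_equiv : ∀ X : C, (app X).IsEquivalence
  nat : ∀ {X Y : C} (c : X ⟶ Y), app Y ⋙ F.map c ≅ precompF I c ⋙ app X
  nat_natural : ∀ {X Y : C} {c d : X ⟶ Y} (γ : c ⟶ d),
      CategoryTheory.Functor.whiskerLeft (app Y) (F.map₂ γ) ≫ (nat d).hom =
      (nat c).hom ≫ CategoryTheory.Functor.whiskerRight (precompNat I γ) (app X)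
  nat_comp : ∀ {X Y Z : C} (c : X ⟶ Y) (d : Y ⟶ Z),
      (nat (c ≫ d)).hom =
      CategoryTheory.Functor.whiskerLeft (app Z) (F.mapComp c d).inv ≫
        CategoryTheory.Functor.whiskerRight (nat d).hom (F.map c) ≫
        CategoryTheory.Functor.whiskerLeft (precompF I d) (nat c).hom ≫
        eqToHom (congrArg (fun K => K ⋙ app X) (precompF_comp I c d))


/-- The canonical functor `ρ̄_X : C(X, I) ⥤ F(X)`, `f ↦ F(f)(i)`, `γ ↦ F(γ)_i`. -/
def rbar (F : NPCat C) (I : C) (i : F.obj I) (X : C) : (X ⟶ I) ⥤ F.obj X where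
  obj f := (F.map f).obj i
  map γ := (F.map₂ γ).app i
  map_id f := by rw [F.map₂_id]; rfl
  map_comp γ δ := by rw [F.map₂_comp]; rfl

/-!
Evaluating the pseudo-naturality square of `ρ` at `c = f : X ⟶ I` on the object `𝟙 I` gives
`F(f)(i) ≅ ρ_X(f ≫ 𝟙 I) = ρ_X(f)`; the axiom `nat_natural` makes these isomorphisms natural in `f`.
Hence `ρ̄_X ≅ ρ_X`, so `ρ̄_X` is an equivalence. The pseudo-naturality of `ρ̄` itself comes from
the compositor of `F`: `F(c)(F(h)(i)) ≅ F(c ≫ h)(i)`.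
-/

lemma Bicategory.Strict.whiskerRight_id_eq {a b : C} {f g : a ⟶ b} (γ : f ⟶ g) :
    γ ▷ 𝟙 b = eqToHom (Bicategory.Strict.comp_id f) ≫ γ ≫
      eqToHom (Bicategory.Strict.comp_id g).symm := by
  rw [Bicategory.whiskerRight_id, Bicategory.Strict.rightUnitor_eqToIso,
    Bicategory.Strict.rightUnitor_eqToIso]
  rfl

def rbarNat (F : NPCat C) (I : C) (i : F.obj I) {X Y : C} (c : X ⟶ Y) :
    rbar F I i Y ⋙ F.map c ≅ precompF I c ⋙ rbar F I i X :=
  NatIso.ofComponents (fun h => (F.mapComp c h).app i) (fun {h h'} η => by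
    have := congrArg (fun α => NatTrans.app α i) (F.mapComp_natural (𝟙 c) η)
    simpa [F.map₂_id, rbar, precompF] using this)

def rbarIso (F : NPCat C) (I : C) (ρ : BiRep F I) (X : C) :
    rbar F I ((ρ.app I).obj (𝟙 I)) X ≅ ρ.app X :=
  NatIso.ofComponents
    (fun f => (ρ.nat f).app (𝟙 I) ≪≫ eqToIso (by dsimp [precompF]; rw [Category.comp_id]))
    (fun {f g} γ => by
      have h := congrArg (fun α => NatTrans.app α (𝟙 I)) (ρ.nat_natural γ)
      simp only [NatTrans.comp_app, Functor.whiskerLeft_app, Functor.whiskerRight_app,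
        precompNat, Bicategory.Strict.whiskerRight_id_eq] at h
      erw [Functor.map_comp, Functor.map_comp, eqToHom_map, eqToHom_map] at h
      simp [rbar, reassoc_of% h])

theorem stmt16 (F : NPCat C) (I : C) (ρ : BiRep F I) :
    (∀ X : C, (rbar F I ((ρ.app I).obj (𝟙 I)) X).IsEquivalence) ∧
    (∀ {X Y : C} (c : X ⟶ Y),
      Nonempty (rbar F I ((ρ.app I).obj (𝟙 I)) Y ⋙ F.map c ≅
        precompF I c ⋙ rbar F I ((ρ.app I).obj (𝟙 I)) X)) ∧
    (∀ X : C, ∃ e : rbar F I ((ρ.app I).obj (𝟙 I)) X ≅ ρ.app X,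
      ∀ f : X ⟶ I,
        e.hom.app f = (ρ.nat f).hom.app (𝟙 I) ≫ eqToHom (by dsimp [precompF]; rw [Category.comp_id])) := by
  refine ⟨fun X => ?_, fun c => ⟨rbarNat F I _ c⟩, fun X => ⟨rbarIso F I ρ X, fun _ => rfl⟩⟩
  have := ρ.app_equiv X
  exact Functor.isEquivalence_of_iso (rbarIso F I ρ X).symm
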